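/- Let Δx > 0 and let u : ℝ → ℝ be a polynomial function of degree at most 3. For y ∈ ℝ define the P² coefficient a₁(y) = (1/Δx)∫_{y−Δx/2}^{y+Δx/2} u(x)·2√3·(x−y)/Δx dx. Then for every y ∈ ℝ: (√5/Δx)·(u(y + Δx/2) − u(y − Δx/2) − √12·a₁(y)) = (√5/60)·u'''(y)·Δx². -/

import Mathlib

/-!
Expand `u` about the cell centre: `u (y + t) = b₀ + b₁ t + b₂ t² + b₃ t³`, where the `bₖ` are the
Taylor coefficients of `p` at `y`, so `b₃ = u'''(y) / 6`. With `h = Δx / 2` only the odd terms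
survive both in the flux difference, `2 b₁ h + 2 b₃ h³`, and in the first moment
`∫_{-h}^{h} u (y + t) t dt = 2 b₁ h³ / 3 + 2 b₃ h⁵ / 5`. Since `√12 a₁ = (3 / h²) · moment`, the
`b₁` terms cancel and what remains is `4 b₃ h³ / 5 = u'''(y) Δx³ / 60`.
-/

open Real Polynomial Nat

namespace Polynomial

variable {𝕜 : Type*} [NontriviallyNormedField 𝕜]

lemma iteratedDeriv_eval (p : 𝕜[X]) (k : ℕ) :
    iteratedDeriv k (fun x => p.eval x) = fun x => (derivative^[k] p).eval x := by
  induction k generalizing p with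
  | zero => rfl
  | succ k ih =>
    have hd : deriv (fun x => p.eval x) = fun x => p.derivative.eval x := by
      ext; exact Polynomial.deriv _
    rw [iteratedDeriv_succ', hd, ih]
    rfl

lemma iteratedDeriv_eval_eq_factorial_mul_taylor_coeff (p : 𝕜[X]) (k : ℕ) (y : 𝕜) :
    iteratedDeriv k (fun x => p.eval x) y = k ! * (taylor y p).coeff k := by
  rw [iteratedDeriv_eval, taylor_coeff, ← factorial_smul_hasseDeriv, LinearMap.smul_apply,
    nsmul_eq_mul]
  simp

lemma eval_eq_cubic_of_natDegree_le_three {R : Type*} [CommSemiring R] {q : R[X]}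
    (hq : q.natDegree ≤ 3) (t : R) :
    q.eval t = q.coeff 0 + q.coeff 1 * t + q.coeff 2 * t ^ 2 + q.coeff 3 * t ^ 3 := by
  rw [eval_eq_sum_range' (Nat.lt_succ_of_le hq)]
  simp [Finset.sum_range_succ, mul_comm]

end Polynomial

lemma integral_neg_self_cubic_mul_id (b₀ b₁ b₂ b₃ h : ℝ) :
    ∫ t in -h..h, (b₀ + b₁ * t + b₂ * t ^ 2 + b₃ * t ^ 3) * t
      = 2 * b₁ * h ^ 3 / 3 + 2 * b₃ * h ^ 5 / 5 := by
  have hF : ∀ t : ℝ, HasDerivAt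
      (fun t => b₀ * t ^ 2 / 2 + b₁ * t ^ 3 / 3 + b₂ * t ^ 4 / 4 + b₃ * t ^ 5 / 5)
      ((b₀ + b₁ * t + b₂ * t ^ 2 + b₃ * t ^ 3) * t) t := by
    intro t
    refine (((((hasDerivAt_pow 2 t).const_mul b₀).div_const 2).add
      (((hasDerivAt_pow 3 t).const_mul b₁).div_const 3)).add
      (((hasDerivAt_pow 4 t).const_mul b₂).div_const 4)).add
      (((hasDerivAt_pow 5 t).const_mul b₃).div_const 5) |>.congr_deriv ?_
    push_cast
    ring
  rw [intervalIntegral.integral_eq_sub_of_hasDerivAt (fun t _ => hF t)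
    (Continuous.intervalIntegrable (by fun_prop) _ _)]
  ring

lemma integral_eval_mul_sub_of_natDegree_le_three {p : ℝ[X]} (hp : p.natDegree ≤ 3) (y h : ℝ) :
    ∫ x in (y - h)..(y + h), p.eval x * (x - y)
      = 2 * (taylor y p).coeff 1 * h ^ 3 / 3 + 2 * (taylor y p).coeff 3 * h ^ 5 / 5 := by
  have hq : (taylor y p).natDegree ≤ 3 := (natDegree_taylor p y).trans_le hp
  have hshift := intervalIntegral.integral_comp_add_right
    (fun x => p.eval x * (x - y)) (a := -h) (b := h) y
  rw [neg_add_eq_sub, add_comm h] at hshift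
  rw [← hshift, ← integral_neg_self_cubic_mul_id]
  congr 1
  ext t
  rw [← taylor_eval, eval_eq_cubic_of_natDegree_le_three hq, add_sub_cancel_right]

lemma sqrt_twelve_mul_sqrt_three : √12 * √3 = 6 := by
  rw [← Real.sqrt_mul (by norm_num), show (12 : ℝ) * 3 = 6 ^ 2 by norm_num,
    Real.sqrt_sq (by norm_num)]

theorem dg_p2_a2_operator_exact_flux_general (Δx : ℝ)
    (u : ℝ → ℝ) (p : Polynomial ℝ) (hp : p.natDegree ≤ 3)
    (hu : ∀ x, u x = p.eval x)
    (a₁ : ℝ → ℝ)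
    (ha₁ : ∀ y, a₁ y = (1 / Δx) * ∫ x in (y - Δx / 2)..(y + Δx / 2),
      u x * (2 * Real.sqrt 3 * ((x - y) / Δx))) :
    ∀ y : ℝ, (Real.sqrt 5 / Δx) *
        (u (y + Δx / 2) - u (y - Δx / 2) - Real.sqrt 12 * a₁ y)
      = (Real.sqrt 5 / 60) * iteratedDeriv 3 u y * Δx ^ 2 := by
  intro y
  have hq : (taylor y p).natDegree ≤ 3 := (natDegree_taylor p y).trans_le hp
  have hflux : ∀ t, u (y + t) = (taylor y p).eval t := fun t => by
    rw [hu, taylor_eval, add_comm]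
  have hderiv : iteratedDeriv 3 u y = 6 * (taylor y p).coeff 3 := by
    rw [funext hu, iteratedDeriv_eval_eq_factorial_mul_taylor_coeff]
    norm_num
  have hmoment : √12 * a₁ y
      = 12 / Δx ^ 2 * ∫ x in (y - Δx / 2)..(y + Δx / 2), p.eval x * (x - y) := by
    rw [ha₁, ← mul_assoc, ← intervalIntegral.integral_const_mul,
      ← intervalIntegral.integral_const_mul]
    congr 1
    ext x
    rw [hu]
    linear_combination (2 * p.eval x * (x - y) / Δx ^ 2) * sqrt_twelve_mul_sqrt_three
  have hresidual : u (y + Δx / 2) - u (y - Δx / 2) - √12 * a₁ y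
      = (taylor y p).coeff 3 * Δx ^ 3 / 10 := by
    rw [hmoment, integral_eval_mul_sub_of_natDegree_le_three hp, hflux, sub_eq_add_neg y, hflux,
      eval_eq_cubic_of_natDegree_le_three hq, eval_eq_cubic_of_natDegree_le_three hq]
    field_simp
    ring
  rw [hresidual, hderiv]
  field_simp
  ring

/-- The spatial operator in the `a₂` equation of the third-order DG scheme with exact
interface values equals `(√5/60)·u'''(y)·Δx²` for cubic `u`. -/
theorem dg_p2_a2_operator_exact_flux (Δx : ℝ) (hΔx : 0 < Δx)
    (u : ℝ → ℝ) (p : Polynomial ℝ) (hp : p.natDegree ≤ 3)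
    (hu : ∀ x, u x = p.eval x)
    (a₁ : ℝ → ℝ)
    (ha₁ : ∀ y, a₁ y = (1 / Δx) * ∫ x in (y - Δx / 2)..(y + Δx / 2),
      u x * (2 * Real.sqrt 3 * ((x - y) / Δx))) :
    ∀ y : ℝ, (Real.sqrt 5 / Δx) *
        (u (y + Δx / 2) - u (y - Δx / 2) - Real.sqrt 12 * a₁ y)
      = (Real.sqrt 5 / 60) * iteratedDeriv 3 u y * Δx ^ 2 :=
  dg_p2_a2_operator_exact_flux_general Δx u p hp hu a₁ ha₁
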